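/- arXiv:2510.15363 — 6 statements merged into one kernel-verified Lean document; each statement's English description precedes it below -/
import Mathlib

section
/- Let X₁, …, Xₙ be independent mean-zero random variables taking values in a real Hilbert space H. Then for every λ ≥ 0, E[cosh(λ·‖X₁ + ⋯ + Xₙ‖)] ≤ ∏_{j=1}^{n} E[exp(λ·‖X_j‖) − λ·‖X_j‖]. -/
/-!
For `u = ‖y‖`, `v = ‖z‖`, the square `‖y + z‖²` is a convex combination of `(u - v)²` and
`(u + v)²` whose weights are read off from `⟪y, z⟫ / (u v)`. Since `t ↦ cosh (l √t)` is convex,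
`cosh (l ‖y + z‖) ≤ cosh (l u) cosh (l v) + ⟪y, z⟫ / (u v) · sinh (l u) sinh (l v)`, and
`sinh (l v) ≥ l v` turns this into
`cosh (l ‖y + z‖) ≤ cosh (l u) (exp (l v) - l v) + ⟪∇ cosh (l ‖·‖) y, z⟫`.
With `y` a partial sum and `z` an independent centred summand the linear term has zero
expectation, and induction over the summands gives the product bound.
-/

open MeasureTheory ProbabilityTheory Real Set

namespace Real

lemma convexOn_sinh_Ici : ConvexOn ℝ (Ici 0) sinh := by
  refine MonotoneOn.convexOn_of_deriv (convex_Ici 0) continuous_sinh.continuousOn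
    differentiable_sinh.differentiableOn ?_
  rw [deriv_sinh, interior_Ici]
  intro a ha b hb hab
  rwa [cosh_le_cosh, abs_of_pos ha, abs_of_pos hb]

lemma monotoneOn_sinh_div_self : MonotoneOn (fun x ↦ sinh x / x) (Ioi 0) := by
  intro a ha b hb hab
  simpa using convexOn_sinh_Ici.secant_mono self_mem_Ici (mem_Ici.2 ha.le)
    (mem_Ici.2 hb.le) ha.ne' hb.ne' hab

lemma hasDerivAt_cosh_mul_sqrt {l t : ℝ} (hl : l ≠ 0) (ht : 0 < t) :
    HasDerivAt (fun t ↦ cosh (l * √t)) (l ^ 2 / 2 * (sinh (l * √t) / (l * √t))) t := by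
  have hs : √t ≠ 0 := (sqrt_pos.2 ht).ne'
  refine ((hasDerivAt_cosh _).comp t ((hasDerivAt_sqrt ht.ne').const_mul l)).congr_deriv ?_
  field_simp

theorem convexOn_cosh_mul_sqrt (l : ℝ) : ConvexOn ℝ (Ici 0) fun t ↦ cosh (l * √t) := by
  obtain rfl | hl0 := eq_or_ne l 0
  · simpa using convexOn_const 1 (convex_Ici 0)
  wlog hl : 0 < l generalizing l
  · simpa [neg_mul, cosh_neg] using this (-l) (neg_ne_zero.2 hl0) (by grind)
  refine MonotoneOn.convexOn_of_deriv (convex_Ici 0) (by fun_prop) ?_ ?_ <;> rw [interior_Ici]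
  · exact fun t ht ↦ (hasDerivAt_cosh_mul_sqrt hl0 ht).differentiableAt.differentiableWithinAt
  · intro t₁ ht₁ t₂ ht₂ h
    rw [(hasDerivAt_cosh_mul_sqrt hl0 ht₁).deriv, (hasDerivAt_cosh_mul_sqrt hl0 ht₂).deriv]
    have hpos : ∀ t ∈ Ioi (0 : ℝ), l * √t ∈ Ioi 0 := fun t ht ↦ mul_pos hl (sqrt_pos.2 ht)
    gcongr ?_ * ?_
    exact monotoneOn_sinh_div_self (hpos t₁ ht₁) (hpos t₂ ht₂) (by gcongr)

lemma abs_sinh_le_cosh (x : ℝ) : |sinh x| ≤ cosh x := by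
  rw [abs_sinh, ← cosh_abs]
  exact (sinh_lt_cosh _).le

end Real

open scoped RealInnerProductSpace

section Pointwise

variable {H : Type*} [NormedAddCommGroup H] [InnerProductSpace ℝ H]

lemma cosh_mul_norm_add_le_cosh_mul_cosh_add (l : ℝ) (y z : H) :
    cosh (l * ‖y + z‖) ≤ cosh (l * ‖y‖) * cosh (l * ‖z‖) +
      ⟪y, z⟫ / (‖y‖ * ‖z‖) * (sinh (l * ‖y‖) * sinh (l * ‖z‖)) := by
  set θ := ⟪y, z⟫ / (‖y‖ * ‖z‖)
  obtain ⟨hθ₁, hθ₂⟩ := abs_le.1 (abs_real_inner_div_norm_mul_norm_le_one y z)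
  have hθ : θ * (‖y‖ * ‖z‖) = ⟪y, z⟫ := by
    rcases eq_or_ne (‖y‖ * ‖z‖) 0 with h | h
    · rcases mul_eq_zero.1 h with h | h <;> simp_all [θ]
    · exact div_mul_cancel₀ _ h
  have hsq : ‖y + z‖ ^ 2 =
      (1 + θ) / 2 * (‖y‖ + ‖z‖) ^ 2 + (1 - θ) / 2 * (‖y‖ - ‖z‖) ^ 2 := by
    rw [norm_add_sq_real, ← hθ]; ring
  have hconv := (convexOn_cosh_mul_sqrt l).2 (sq_nonneg (‖y‖ + ‖z‖)) (sq_nonneg (‖y‖ - ‖z‖))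
    (by linarith : 0 ≤ (1 + θ) / 2) (by linarith : 0 ≤ (1 - θ) / 2) (by ring)
  have habs : cosh (l * |‖y‖ - ‖z‖|) = cosh (l * (‖y‖ - ‖z‖)) := by
    rcases abs_choice (‖y‖ - ‖z‖) with h | h <;> rw [h]
    rw [mul_neg, cosh_neg]
  simp only [smul_eq_mul, ← hsq, sqrt_sq (norm_nonneg _), sqrt_sq_eq_abs,
    abs_of_nonneg (by positivity : 0 ≤ ‖y‖ + ‖z‖), habs] at hconv
  refine hconv.trans_eq ?_
  rw [mul_add, mul_sub, cosh_add, cosh_sub]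
  ring

/-- The gradient of `y ↦ cosh (l * ‖y‖)` away from the origin. -/
noncomputable def coshNormGrad (l : ℝ) (y : H) : H := (l * sinh (l * ‖y‖) / ‖y‖) • y

lemma norm_coshNormGrad (l : ℝ) (y : H) : ‖coshNormGrad l y‖ = |l| * |sinh (l * ‖y‖)| := by
  rcases eq_or_ne y 0 with rfl | hy
  · simp [coshNormGrad]
  · rw [coshNormGrad, norm_smul, Real.norm_eq_abs, abs_div, abs_norm, abs_mul,
      div_mul_cancel₀ _ (norm_ne_zero_iff.2 hy)]

theorem cosh_mul_norm_add_le {l : ℝ} (hl : 0 ≤ l) (y z : H) :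
    cosh (l * ‖y + z‖) ≤
      cosh (l * ‖y‖) * (exp (l * ‖z‖) - l * ‖z‖) + ⟪coshNormGrad l y, z⟫ := by
  set θ := ⟪y, z⟫ / (‖y‖ * ‖z‖)
  have hgrad : ⟪coshNormGrad l y, z⟫ = θ * sinh (l * ‖y‖) * (l * ‖z‖) := by
    rcases eq_or_ne y 0 with rfl | hy
    · simp [coshNormGrad, θ]
    rcases eq_or_ne z 0 with rfl | hz
    · simp [θ]
    simp only [coshNormGrad, real_inner_smul_left, θ]
    field_simp
  have hθ : θ * sinh (l * ‖y‖) ≤ cosh (l * ‖y‖) := by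
    have hθ₁ := (abs_le.1 (abs_real_inner_div_norm_mul_norm_le_one y z)).2
    have hsinh₀ := sinh_nonneg_iff.2 (mul_nonneg hl (norm_nonneg y))
    nlinarith [sinh_lt_cosh (l * ‖y‖)]
  have hsinh : l * ‖z‖ ≤ sinh (l * ‖z‖) := self_le_sinh_iff.2 (by positivity)
  have hmul := mul_le_mul_of_nonneg_right hθ (sub_nonneg.2 hsinh)
  have hconv := cosh_mul_norm_add_le_cosh_mul_cosh_add l y z
  rw [hgrad, ← cosh_add_sinh]
  linarith

end Pointwise

namespace ProbabilityTheory

variable {Ω ι : Type*} {mΩ : MeasurableSpace Ω} {μ : Measure Ω}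

/-- Addition need not be measurable on a non-separable `E`; the sum is instead measurable for the
join of the σ-algebras generated by the summands, because their ranges are separable. -/
lemma iIndepFun.indepFun_finsetSum_of_notMem_of_stronglyMeasurable
    {E : Type*} [NormedAddCommGroup E] [MeasurableSpace E] [BorelSpace E] {X : ι → Ω → E}
    (h : iIndepFun X μ) (hX : ∀ j, StronglyMeasurable (X j)) {s : Finset ι} {i : ι}
    (hi : i ∉ s) : (∑ j ∈ s, X j) ⟂ᵢ[μ] X i := by
  set m : ι → MeasurableSpace Ω := fun j ↦ MeasurableSpace.comap (X j) inferInstance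
  have hm : ∀ j, StronglyMeasurable[m j] (X j) := fun j ↦
    stronglyMeasurable_iff_measurable_separable.2
      ⟨comap_measurable (X j), (hX j).isSeparable_range⟩
  have hsum : Measurable[⨆ j ∈ (s : Set ι), m j] (∑ j ∈ s, X j) :=
    (Finset.stronglyMeasurable_sum s fun j hj ↦
      (hm j).mono (le_iSup₂ (f := fun j _ ↦ m j) j hj)).measurable
  have hindep := indep_iSup_of_disjoint (fun j ↦ (hX j).measurable.comap_le)
    ((iIndepFun_iff_iIndep _ X μ).1 h) (Set.disjoint_singleton_right.2 hi)
  rw [IndepFun_iff_Indep]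
  exact indep_of_indep_of_le hindep hsum.comap_le
    (le_iSup₂ (f := fun j (_ : j ∈ ({i} : Set ι)) ↦ m j) i rfl)

lemma iIndepFun.indepFun_finsetSum_of_notMem_of_aestronglyMeasurable
    {E : Type*} [NormedAddCommGroup E] [MeasurableSpace E] [BorelSpace E] {X : ι → Ω → E}
    (h : iIndepFun X μ) (hX : ∀ j, AEStronglyMeasurable (X j) μ) {s : Finset ι} {i : ι}
    (hi : i ∉ s) : (∑ j ∈ s, X j) ⟂ᵢ[μ] X i :=
  ((h.congr fun j ↦ (hX j).ae_eq_mk).indepFun_finsetSum_of_notMem_of_stronglyMeasurable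
    (fun j ↦ (hX j).stronglyMeasurable_mk) hi).congr
    (eventuallyEq_sum fun j _ ↦ (hX j).ae_eq_mk.symm) (hX i).ae_eq_mk.symm

variable {H : Type*} [NormedAddCommGroup H] [InnerProductSpace ℝ H]
  [MeasurableSpace H] [BorelSpace H]

lemma integrable_coshNormGrad_map {S : Ω → H} (hS : AEStronglyMeasurable S μ) {l : ℝ}
    (h : Integrable (fun ω ↦ cosh (l * ‖S ω‖)) μ) : Integrable (coshNormGrad l) (μ.map S) := by
  have hcosh : Integrable (fun y : H ↦ cosh (l * ‖y‖)) (μ.map S) :=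
    (integrable_map_measure (by fun_prop) hS.aemeasurable).2 h
  refine (hcosh.const_mul |l|).mono' ?_ (ae_of_all _ fun y ↦ ?_)
  · exact (Measurable.aestronglyMeasurable (by fun_prop)).smul hS.aestronglyMeasurable_id_map
  · rw [norm_coshNormGrad]
    gcongr
    exact abs_sinh_le_cosh _

variable [CompleteSpace H]

theorem IndepFun.integral_cosh_norm_add_le {S Z : Ω → H} (hSZ : S ⟂ᵢ[μ] Z)
    (hS : AEStronglyMeasurable S μ) (hZ : Integrable Z μ) (hZ₀ : μ[Z] = 0) {l : ℝ} (hl : 0 ≤ l)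
    (hcoshS : Integrable (fun ω ↦ cosh (l * ‖S ω‖)) μ)
    (hexpZ : Integrable (fun ω ↦ exp (l * ‖Z ω‖)) μ) :
    Integrable (fun ω ↦ cosh (l * ‖S ω + Z ω‖)) μ ∧
      ∫ ω, cosh (l * ‖S ω + Z ω‖) ∂μ ≤
        (∫ ω, cosh (l * ‖S ω‖) ∂μ) * ∫ ω, (exp (l * ‖Z ω‖) - l * ‖Z ω‖) ∂μ := by
  have hgZ : Integrable (fun ω ↦ exp (l * ‖Z ω‖) - l * ‖Z ω‖) μ :=
    hexpZ.sub (hZ.norm.const_mul l)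
  have hgrad := integrable_coshNormGrad_map hS hcoshS
  have hgradS : Integrable (fun ω ↦ coshNormGrad l (S ω)) μ :=
    (integrable_map_measure hgrad.1 hS.aemeasurable).1 hgrad
  have hindep₁ : (fun ω ↦ cosh (l * ‖S ω‖)) ⟂ᵢ[μ] (fun ω ↦ exp (l * ‖Z ω‖) - l * ‖Z ω‖) :=
    hSZ.comp (φ := fun y ↦ cosh (l * ‖y‖)) (ψ := fun z ↦ exp (l * ‖z‖) - l * ‖z‖)
      (by fun_prop) (by fun_prop)
  have hindep₂ : (fun ω ↦ coshNormGrad l (S ω)) ⟂ᵢ[μ] Z :=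
    hSZ.comp₀ (ψ := id) hS.aemeasurable hZ.aemeasurable hgrad.aemeasurable aemeasurable_id
  have hprod : Integrable (fun ω ↦ cosh (l * ‖S ω‖) * (exp (l * ‖Z ω‖) - l * ‖Z ω‖)) μ :=
    hindep₁.integrable_mul hcoshS hgZ
  have hinner : Integrable (fun ω ↦ ⟪coshNormGrad l (S ω), Z ω⟫) μ :=
    hindep₂.integrable_bilin hgradS hZ (innerSL ℝ)
  have hbound : ∀ ω, cosh (l * ‖S ω + Z ω‖) ≤
      cosh (l * ‖S ω‖) * (exp (l * ‖Z ω‖) - l * ‖Z ω‖) + ⟪coshNormGrad l (S ω), Z ω⟫ :=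
    fun ω ↦ cosh_mul_norm_add_le hl (S ω) (Z ω)
  have hint : Integrable (fun ω ↦ cosh (l * ‖S ω + Z ω‖)) μ :=
    (hprod.add hinner).mono' (by fun_prop) (ae_of_all _ fun ω ↦ by
      rw [norm_of_nonneg (cosh_pos _).le]
      exact hbound ω)
  have hzero : ∫ ω, ⟪coshNormGrad l (S ω), Z ω⟫ ∂μ = 0 := by
    refine (hindep₂.integral_bilin hgradS hZ (innerSL ℝ)).trans ?_
    simp [hZ₀]
  refine ⟨hint, ?_⟩
  calc ∫ ω, cosh (l * ‖S ω + Z ω‖) ∂μ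
      ≤ ∫ ω, (cosh (l * ‖S ω‖) * (exp (l * ‖Z ω‖) - l * ‖Z ω‖)
          + ⟪coshNormGrad l (S ω), Z ω⟫) ∂μ := integral_mono hint (hprod.add hinner) hbound
    _ = (∫ ω, cosh (l * ‖S ω‖) ∂μ) * ∫ ω, (exp (l * ‖Z ω‖) - l * ‖Z ω‖) ∂μ := by
      rw [integral_add hprod hinner, hzero, add_zero,
        hindep₁.integral_fun_mul_eq_mul_integral hcoshS.1 hgZ.1]

theorem integral_cosh_norm_finsetSum_le [IsProbabilityMeasure μ] {X : ι → Ω → H}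
    (hindep : iIndepFun X μ) (hint : ∀ j, Integrable (X j) μ) (hmean : ∀ j, μ[X j] = 0)
    {l : ℝ} (hl : 0 ≤ l) (hexp : ∀ j, Integrable (fun ω ↦ exp (l * ‖X j ω‖)) μ)
    (s : Finset ι) :
    Integrable (fun ω ↦ cosh (l * ‖∑ j ∈ s, X j ω‖)) μ ∧
      ∫ ω, cosh (l * ‖∑ j ∈ s, X j ω‖) ∂μ ≤
        ∏ j ∈ s, ∫ ω, (exp (l * ‖X j ω‖) - l * ‖X j ω‖) ∂μ := by
  classical
  induction s using Finset.induction_on with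
  | empty => simp
  | insert i s hi ih =>
    have hindep_i : (fun ω ↦ ∑ j ∈ s, X j ω) ⟂ᵢ[μ] X i := by
      simpa [Finset.sum_fn] using
        hindep.indepFun_finsetSum_of_notMem_of_aestronglyMeasurable (fun j ↦ (hint j).1) hi
    obtain ⟨hint_i, hle_i⟩ := hindep_i.integral_cosh_norm_add_le
      (Finset.aestronglyMeasurable_fun_sum s fun j _ ↦ (hint j).1) (hint i) (hmean i) hl ih.1
      (hexp i)
    simp only [Finset.sum_insert hi, Finset.prod_insert hi, add_comm (X i _)]
    refine ⟨hint_i, hle_i.trans ?_⟩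
    rw [mul_comm]
    gcongr
    · exact integral_nonneg fun ω ↦
        sub_nonneg.2 ((le_add_of_nonneg_right zero_le_one).trans (add_one_le_exp _))
    · exact ih.2

end ProbabilityTheory

theorem stmt_2_general {Ω : Type*} [MeasurableSpace Ω] {μ : Measure Ω} [IsProbabilityMeasure μ]
    {H : Type*} [NormedAddCommGroup H] [InnerProductSpace ℝ H] [CompleteSpace H]
    [MeasurableSpace H] [BorelSpace H]
    (n : ℕ) (X : Fin n → Ω → H)
    (hindep : iIndepFun X μ)
    (hint : ∀ j, Integrable (X j) μ)
    (hmean : ∀ j, ∫ ω, X j ω ∂μ = 0)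
    (l : ℝ) (hl : 0 ≤ l)
    (hexp : ∀ j, Integrable (fun ω => Real.exp (l * ‖X j ω‖)) μ) :
    ∫ ω, Real.cosh (l * ‖∑ j, X j ω‖) ∂μ ≤
      ∏ j, ∫ ω, (Real.exp (l * ‖X j ω‖) - l * ‖X j ω‖) ∂μ :=
  (integral_cosh_norm_finsetSum_le hindep hint hmean hl hexp Finset.univ).2

theorem stmt_2 {Ω : Type*} [MeasurableSpace Ω] {μ : Measure Ω} [IsProbabilityMeasure μ]
    {H : Type*} [NormedAddCommGroup H] [InnerProductSpace ℝ H] [CompleteSpace H]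
    [MeasurableSpace H] [BorelSpace H]
    (n : ℕ) (X : Fin n → Ω → H)
    (hmeas : ∀ j, Measurable (X j))
    (hindep : iIndepFun X μ)
    (hint : ∀ j, Integrable (X j) μ)
    (hmean : ∀ j, ∫ ω, X j ω ∂μ = 0)
    (l : ℝ) (hl : 0 ≤ l)
    (hcosh : Integrable (fun ω => Real.cosh (l * ‖∑ j, X j ω‖)) μ)
    (hexp : ∀ j, Integrable (fun ω => Real.exp (l * ‖X j ω‖)) μ) :
    ∫ ω, Real.cosh (l * ‖∑ j, X j ω‖) ∂μ ≤
      ∏ j, ∫ ω, (Real.exp (l * ‖X j ω‖) - l * ‖X j ω‖) ∂μ :=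
  stmt_2_general n X hindep hint hmean l hl hexp
end

section
/- Let A be a positive semidefinite symmetric n×n real matrix with A ≠ 0, and let φ : [0,∞) → ℝ be a convex function with φ(0) = 0. Then tr(φ(A)) ≤ (tr(A)/‖A‖) · φ(‖A‖), where ‖A‖ is the operator norm of A and φ(A) is defined by applying φ to the eigenvalues of A. -/
/-! Every eigenvalue `λ` of `A` lies in `[0, ‖A‖]`. On that interval the graph of `φ` lies below
its chord from `(0, 0)` to `(‖A‖, φ ‖A‖)`, so `φ λ ≤ (λ / ‖A‖) φ ‖A‖`; summing over the eigenvalues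
and using `tr A = ∑ λ` gives the bound. -/

open Matrix

theorem ConvexOn.map_smul_le_smul_of_map_zero_nonpos {𝕜 E β : Type*} [Ring 𝕜] [PartialOrder 𝕜]
    [IsOrderedRing 𝕜] [AddCommGroup E] [Module 𝕜 E] [AddCommMonoid β] [PartialOrder β]
    [IsOrderedAddMonoid β] [Module 𝕜 β] [PosSMulMono 𝕜 β] {s : Set E} {f : E → β}
    (hf : ConvexOn 𝕜 s f) (h0 : (0 : E) ∈ s) (hf0 : f 0 ≤ 0) {x : E} (hx : x ∈ s) {t : 𝕜}
    (ht0 : 0 ≤ t) (ht1 : t ≤ 1) : f (t • x) ≤ t • f x :=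
  calc f (t • x) = f ((1 - t) • (0 : E) + t • x) := by rw [smul_zero, zero_add]
    _ ≤ (1 - t) • f 0 + t • f x := hf.2 h0 hx (sub_nonneg.2 ht1) ht0 (sub_add_cancel 1 t)
    _ ≤ t • f x := add_le_of_nonpos_left (smul_nonpos_of_nonneg_of_nonpos (sub_nonneg.2 ht1) hf0)

theorem ConvexOn.map_le_div_mul_of_map_zero_nonpos {f : ℝ → ℝ} (hf : ConvexOn ℝ (Set.Ici 0) f)
    (hf0 : f 0 ≤ 0) {x M : ℝ} (hx : 0 ≤ x) (hxM : x ≤ M) : f x ≤ x / M * f M := by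
  rcases (hx.trans hxM).eq_or_lt with rfl | hM
  · obtain rfl : x = 0 := le_antisymm hxM hx
    simpa using hf0
  have := hf.map_smul_le_smul_of_map_zero_nonpos Set.self_mem_Ici hf0 (Set.mem_Ici.2 hM.le)
    (div_nonneg hx hM.le) ((div_le_one hM).2 hxM)
  rwa [smul_eq_mul, div_mul_cancel₀ x hM.ne', smul_eq_mul] at this

theorem Matrix.IsHermitian.abs_eigenvalues_le_norm_toEuclideanCLM {𝕜 n : Type*} [RCLike 𝕜]
    [Fintype n] [DecidableEq n] {A : Matrix n n 𝕜} (hA : A.IsHermitian) (i : n) :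
    |hA.eigenvalues i| ≤ ‖toEuclideanCLM (𝕜 := 𝕜) A‖ := by
  have hv : toEuclideanCLM (𝕜 := 𝕜) A (hA.eigenvectorBasis i) =
      (hA.eigenvalues i : 𝕜) • hA.eigenvectorBasis i := by
    ext j
    simpa using congrFun (hA.mulVec_eigenvectorBasis i) j
  simpa [hv, norm_smul, hA.eigenvectorBasis.orthonormal.1 i] using
    (toEuclideanCLM (𝕜 := 𝕜) A).le_opNorm (hA.eigenvectorBasis i)

theorem stmt_3_general {n : ℕ} (A : Matrix (Fin n) (Fin n) ℝ) (hA : A.PosSemidef)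
    (φ : ℝ → ℝ) (hφ : ConvexOn ℝ (Set.Ici 0) φ) (hφ0 : φ 0 = 0) :
    ∑ i, φ (hA.1.eigenvalues i) ≤
      (A.trace / ‖toEuclideanCLM (𝕜 := ℝ) A‖) * φ ‖toEuclideanCLM (𝕜 := ℝ) A‖ := by
  set M := ‖toEuclideanCLM (𝕜 := ℝ) A‖
  calc ∑ i, φ (hA.1.eigenvalues i) ≤ ∑ i, hA.1.eigenvalues i / M * φ M :=
        Finset.sum_le_sum fun i _ ↦ hφ.map_le_div_mul_of_map_zero_nonpos hφ0.le
          (hA.eigenvalues_nonneg i)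
          ((le_abs_self _).trans (hA.1.abs_eigenvalues_le_norm_toEuclideanCLM i))
    _ = A.trace / M * φ M := by
        rw [← Finset.sum_mul, ← Finset.sum_div, hA.1.trace_eq_sum_eigenvalues]
        simp

theorem stmt_3 {n : ℕ} (A : Matrix (Fin n) (Fin n) ℝ) (hA : A.PosSemidef) (hA0 : A ≠ 0)
    (φ : ℝ → ℝ) (hφ : ConvexOn ℝ (Set.Ici 0) φ) (hφ0 : φ 0 = 0) :
    ∑ i, φ (hA.1.eigenvalues i) ≤
      (A.trace / ‖toEuclideanCLM (𝕜 := ℝ) A‖) * φ ‖toEuclideanCLM (𝕜 := ℝ) A‖ :=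
  stmt_3_general A hA φ hφ hφ0
end

section
/- For positive semidefinite symmetric n×n real matrices A and B with A + B ≠ 0, A ≠ 0, B ≠ 0, the intrinsic dimension is subadditive: tr(A+B)/‖A+B‖ ≤ tr(A)/‖A‖ + tr(B)/‖B‖. -/
/-!
For a positive operator `T` the operator norm is the supremum of the Rayleigh quotient
`⟪T x, x⟫ / ‖x‖²`, and Rayleigh quotients are additive in the operator. Hence
`‖A‖ ≤ ‖A + B‖` for positive semidefinite `A`, `B`, and since the trace is additive and
nonnegative,
`tr (A + B) / ‖A + B‖ = tr A / ‖A + B‖ + tr B / ‖A + B‖ ≤ tr A / ‖A‖ + tr B / ‖B‖`.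
-/

open Matrix

namespace ContinuousLinearMap

variable {𝕜 E : Type*} [RCLike 𝕜] [NormedAddCommGroup E] [InnerProductSpace 𝕜 E]

theorem IsPositive.rayleighQuotient_nonneg {T : E →L[𝕜] E} (hT : T.IsPositive) (x : E) :
    0 ≤ T.rayleighQuotient x :=
  div_nonneg (hT.re_inner_nonneg_left x) (sq_nonneg _)

theorem IsPositive.norm_le_norm_add {T S : E →L[𝕜] E} (hT : T.IsPositive) (hS : S.IsPositive) :
    ‖T‖ ≤ ‖T + S‖ := by
  rw [norm_eq_iSup_rayleighQuotient T hT.isSymmetric]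
  refine ciSup_le fun x => ?_
  calc |T.rayleighQuotient x|
      = T.rayleighQuotient x := abs_of_nonneg (hT.rayleighQuotient_nonneg x)
    _ ≤ T.rayleighQuotient x + S.rayleighQuotient x :=
        le_add_of_nonneg_right (hS.rayleighQuotient_nonneg x)
    _ = (T + S).rayleighQuotient x := (rayleighQuotient_add T S).symm
    _ ≤ ‖T + S‖ := (le_abs_self _).trans ((T + S).rayleighQuotient_le_norm x)

end ContinuousLinearMap

namespace Matrix.PosSemidef

variable {n : Type*} [Fintype n] [DecidableEq n]

open scoped ComplexOrder in
theorem isPositive_toEuclideanCLM {𝕜 : Type*} [RCLike 𝕜] {A : Matrix n n 𝕜}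
    (hA : A.PosSemidef) : (toEuclideanCLM (𝕜 := 𝕜) A).IsPositive := by
  rw [← ContinuousLinearMap.isPositive_toLinearMap_iff, coe_toEuclideanCLM_eq_toEuclideanLin]
  exact isPositive_toEuclideanLin_iff.mpr hA

theorem trace_div_norm_add_le {A B : Matrix n n ℝ} (hA : A.PosSemidef) (hB : B.PosSemidef) :
    A.trace / ‖toEuclideanCLM (𝕜 := ℝ) (A + B)‖ ≤
      A.trace / ‖toEuclideanCLM (𝕜 := ℝ) A‖ := by
  rcases eq_or_ne A 0 with rfl | hA0
  · simp
  have hnorm_pos : 0 < ‖toEuclideanCLM (𝕜 := ℝ) A‖ :=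
    norm_pos_iff.mpr ((map_ne_zero_iff _ (toEuclideanCLM (𝕜 := ℝ)).injective).mpr hA0)
  refine div_le_div_of_nonneg_left hA.trace_nonneg hnorm_pos ?_
  rw [map_add]
  exact hA.isPositive_toEuclideanCLM.norm_le_norm_add hB.isPositive_toEuclideanCLM

end Matrix.PosSemidef

theorem stmt_4_general {n : ℕ} (A B : Matrix (Fin n) (Fin n) ℝ)
    (hA : A.PosSemidef) (hB : B.PosSemidef) :
    (A + B).trace / ‖toEuclideanCLM (𝕜 := ℝ) (A + B)‖ ≤
      A.trace / ‖toEuclideanCLM (𝕜 := ℝ) A‖ + B.trace / ‖toEuclideanCLM (𝕜 := ℝ) B‖ := by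
  rw [trace_add, add_div]
  exact add_le_add (hA.trace_div_norm_add_le hB)
    (by simpa only [add_comm A B] using hB.trace_div_norm_add_le hA)

theorem stmt_4 {n : ℕ} (A B : Matrix (Fin n) (Fin n) ℝ)
    (hA : A.PosSemidef) (hB : B.PosSemidef)
    (hA0 : A ≠ 0) (hB0 : B ≠ 0) (hAB0 : A + B ≠ 0) :
    (A + B).trace / ‖toEuclideanCLM (𝕜 := ℝ) (A + B)‖ ≤
      A.trace / ‖toEuclideanCLM (𝕜 := ℝ) A‖ + B.trace / ‖toEuclideanCLM (𝕜 := ℝ) B‖ :=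
  stmt_4_general A B hA hB
end

section
/- Let T be a compact positive self-adjoint operator with eigenvalues λᵢ satisfying c·i^{-β} ≤ λᵢ ≤ C·i^{-β} for all i ≥ 1, where β > 1 and 0 < c ≤ C. Then for λ ∈ (0,1], tr(T(T+λ)^{-1}) = ∑_{i=1}^∞ λᵢ/(λᵢ + λ) is bounded above and below by constant multiples (depending only on c, C, β) of λ^{-1/β}. -/
open Real

lemma key_tel (β : ℝ) (hβ : 1 < β) {x : ℝ} (hx : 1 ≤ x) :
    (β - 1) * (x + 1) ^ (-β) ≤ x ^ (1 - β) - (x + 1) ^ (1 - β) := by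
  have hx0 : (0:ℝ) < x := lt_of_lt_of_le one_pos hx
  have hx1 : (0:ℝ) < x + 1 := by linarith
  have hbern : 1 + β * (1 / x) ≤ (1 + 1 / x) ^ β :=
    one_add_mul_self_le_rpow_one_add (le_trans (by norm_num : (-1:ℝ) ≤ 0) (by positivity)) hβ.le
  have h1 : (1 : ℝ) + 1 / x = (x + 1) / x := by field_simp
  have h2 : ((x + 1) / x) ^ β = (x + 1) ^ β * x ^ (-β) := by
    rw [Real.div_rpow hx1.le hx0.le, Real.rpow_neg hx0.le, div_eq_mul_inv]
  have h3 : x + β ≤ x * ((x + 1) ^ β * x ^ (-β)) := by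
    have := mul_le_mul_of_nonneg_left hbern hx0.le
    calc x + β = x * (1 + β * (1/x)) := by field_simp
    _ ≤ x * ((x+1)^β * x^(-β)) := by rw [← h2, ← h1]; exact this
  have h4 : (x + β) * (x + 1) ^ (-β) ≤ x * x ^ (-β) := by
    have hpos : (0:ℝ) < (x+1)^(-β) := Real.rpow_pos_of_pos hx1 _
    have := mul_le_mul_of_nonneg_right h3 hpos.le
    have hcancel : (x + 1) ^ β * (x + 1) ^ (-β) = 1 := by
      rw [← Real.rpow_add hx1]; simp
    calc (x + β) * (x+1)^(-β) ≤ x * ((x+1)^β * x^(-β)) * (x+1)^(-β) := this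
    _ = x * x^(-β) * ((x+1)^β * (x+1)^(-β)) := by ring
    _ = x * x^(-β) := by rw [hcancel, mul_one]
  have e1 : x ^ (1 - β) = x * x ^ (-β) := by
    rw [show (1:ℝ) - β = 1 + (-β) by ring, Real.rpow_add hx0, Real.rpow_one]
  have e2 : (x + 1) ^ (1 - β) = (x + 1) * (x + 1) ^ (-β) := by
    rw [show (1:ℝ) - β = 1 + (-β) by ring, Real.rpow_add hx1, Real.rpow_one]
  rw [e1, e2]; nlinarith [h4]

lemma tail_bound (β : ℝ) (hβ : 1 < β) (N : ℕ) (hN : 1 ≤ N) :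
    ∑' i : ℕ, ((N + i + 1 : ℕ) : ℝ) ^ (-β) ≤ (N : ℝ) ^ (1 - β) / (β - 1) := by
  have hb1 : (0:ℝ) < β - 1 := by linarith
  apply Real.tsum_le_of_sum_range_le (fun n => by positivity)
  intro n
  have hstep : ∀ i : ℕ, ((N + i + 1 : ℕ) : ℝ) ^ (-β) ≤
      (((N + i : ℕ) : ℝ) ^ (1 - β) - ((N + i + 1 : ℕ) : ℝ) ^ (1 - β)) / (β - 1) := by
    intro i
    rw [le_div_iff₀ hb1]
    have hx : (1:ℝ) ≤ ((N + i : ℕ) : ℝ) := by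
      have : 1 ≤ N + i := hN.trans (Nat.le_add_right N i)
      exact_mod_cast this
    have := key_tel β hβ hx
    push_cast
    push_cast at this
    nlinarith [this]
  calc ∑ i ∈ Finset.range n, ((N + i + 1 : ℕ) : ℝ) ^ (-β)
      ≤ ∑ i ∈ Finset.range n, (((N + i : ℕ) : ℝ) ^ (1 - β) - ((N + i + 1 : ℕ) : ℝ) ^ (1 - β)) / (β - 1) :=
        Finset.sum_le_sum fun i _ => hstep i
    _ = (∑ i ∈ Finset.range n, (((N + i : ℕ) : ℝ) ^ (1 - β) - ((N + (i+1) : ℕ) : ℝ) ^ (1 - β))) / (β - 1) := by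
        rw [Finset.sum_div]
        exact Finset.sum_congr rfl fun i _ => by rw [Nat.add_assoc]
    _ = (((N : ℝ)) ^ (1 - β) - ((N + n : ℕ) : ℝ) ^ (1 - β)) / (β - 1) := by
        rw [Finset.sum_range_sub' (fun i => ((N + i : ℕ) : ℝ) ^ (1 - β))]
        norm_num
    _ ≤ (N : ℝ) ^ (1 - β) / (β - 1) := by
        have h0 : (0:ℝ) ≤ ((N + n : ℕ) : ℝ) ^ (1 - β) := by positivity
        gcongr
        linarith
/-- Effective dimension of a polynomially decaying eigenvalue sequence:
`ev i` is the `(i+1)`-st eigenvalue (so indexing starts at `1`). -/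
theorem stmt_6 (β c C : ℝ) (hβ : 1 < β) (hc : 0 < c) (hcC : c ≤ C)
    (ev : ℕ → ℝ)
    (hlow : ∀ i : ℕ, c * ((i + 1 : ℕ) : ℝ) ^ (-β) ≤ ev i)
    (hhigh : ∀ i : ℕ, ev i ≤ C * ((i + 1 : ℕ) : ℝ) ^ (-β)) :
    ∃ c' C' : ℝ, 0 < c' ∧ 0 < C' ∧
      ∀ l : ℝ, l ∈ Set.Ioc (0 : ℝ) 1 →
        c' * l ^ (-1 / β) ≤ ∑' i : ℕ, ev i / (ev i + l) ∧
        ∑' i : ℕ, ev i / (ev i + l) ≤ C' * l ^ (-1 / β) := by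
  have hβ0 : (0:ℝ) < β := by linarith
  have hb1 : (0:ℝ) < β - 1 := by linarith
  have hC : (0:ℝ) < C := lt_of_lt_of_le hc hcC
  have hc1 : (0:ℝ) < c + 1 := by linarith
  have hev_pos : ∀ i, 0 < ev i := fun i =>
    lt_of_lt_of_le (by positivity) (hlow i)
  refine ⟨c / (2 * (c + 1)), C ^ (1/β) * (1 + 1/(β-1)) + 1, by positivity, by positivity, ?_⟩
  rintro l ⟨hl, hl1⟩
  set A := l ^ (-1 / β) with hAdef
  have hA1 : (1:ℝ) ≤ A :=
    Real.one_le_rpow_of_pos_of_le_one_of_nonpos hl hl1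
      (by rw [neg_div]; exact neg_nonpos.mpr (by positivity))
  have hA_pow : A ^ (-β) = l := by
    rw [hAdef, ← Real.rpow_mul hl.le, show (-1/β) * (-β) = 1 by field_simp, Real.rpow_one]
  have hdenom : ∀ i, 0 < ev i + l := fun i => add_pos (hev_pos i) hl
  have hf_nonneg : ∀ i, 0 ≤ ev i / (ev i + l) := fun i =>
    div_nonneg (hev_pos i).le (hdenom i).le
  have hf_le_one : ∀ i, ev i / (ev i + l) ≤ 1 := fun i =>
    (div_le_one (hdenom i)).mpr (by linarith)
  have hgsum : Summable (fun i : ℕ => ((i + 1 : ℕ) : ℝ) ^ (-β)) :=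
    (summable_nat_add_iff 1).mpr (Real.summable_nat_rpow.mpr (by linarith))
  have hbd : ∀ i : ℕ, ev i / (ev i + l) ≤ (C * ((i + 1 : ℕ) : ℝ) ^ (-β)) / l := fun i =>
    div_le_div₀ (by positivity) (hhigh i) hl (by linarith [hev_pos i])
  have hfsum : Summable (fun i => ev i / (ev i + l)) :=
    Summable.of_nonneg_of_le hf_nonneg hbd ((hgsum.mul_left C).div_const l)
  constructor
  · -- lower bound
    set N₀ := ⌊A⌋₊ with hN₀def
    have hN₀1 : 1 ≤ N₀ := Nat.le_floor (by exact_mod_cast hA1)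
    have hN₀A : (N₀ : ℝ) ≤ A := Nat.floor_le (by linarith)
    have hAN₀ : A ≤ 2 * (N₀ : ℝ) := by
      rcases le_or_gt A 2 with h | h
      · have h1 : (1:ℝ) ≤ (N₀:ℝ) := by exact_mod_cast hN₀1
        linarith
      · have h2 : A - 1 < (N₀:ℝ) := Nat.sub_one_lt_floor A
        linarith
    have hterm : ∀ i ∈ Finset.range N₀, c/(c+1) ≤ ev i / (ev i + l) := by
      intro i hi
      have hi' : ((i:ℝ) + 1) ≤ A := by
        have : (i + 1 : ℕ) ≤ N₀ := Finset.mem_range.mp hi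
        have : ((i+1 : ℕ) : ℝ) ≤ (N₀:ℝ) := by exact_mod_cast this
        push_cast at this; linarith
      have hx : l ≤ ((i + 1 : ℕ) : ℝ) ^ (-β) := by
        have h1 : A ^ (-β) ≤ ((i + 1 : ℕ) : ℝ) ^ (-β) :=
          Real.rpow_le_rpow_of_nonpos (by positivity) (by push_cast; linarith) (by linarith)
        linarith [hA_pow ▸ h1]
      have hevil : c * l ≤ ev i :=
        le_trans (mul_le_mul_of_nonneg_left hx hc.le) (hlow i)
      rw [div_le_div_iff₀ hc1 (hdenom i)]
      nlinarith [hev_pos i]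
    calc c/(2*(c+1)) * A ≤ c/(2*(c+1)) * (2*(N₀:ℝ)) :=
          mul_le_mul_of_nonneg_left hAN₀ (by positivity)
      _ = (∑ i ∈ Finset.range N₀, c/(c+1)) := by
          rw [Finset.sum_const, Finset.card_range, nsmul_eq_mul]
          field_simp
      _ ≤ ∑ i ∈ Finset.range N₀, ev i / (ev i + l) := Finset.sum_le_sum hterm
      _ ≤ ∑' i, ev i / (ev i + l) := Summable.sum_le_tsum _ (fun i _ => hf_nonneg i) hfsum
  · -- upper bound
    set x := (C / l) ^ (1/β) with hxdef
    have hx0 : (0:ℝ) < x := by positivity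
    set N := ⌈x⌉₊ with hNdef
    have hN1 : 1 ≤ N := Nat.one_le_ceil_iff.mpr hx0
    have hxN : x ≤ (N:ℝ) := Nat.le_ceil x
    have hNx : (N:ℝ) ≤ x + 1 := (Nat.ceil_lt_add_one hx0.le).le
    have hxβ : x ^ β = C / l := by
      rw [hxdef, ← Real.rpow_mul (by positivity), one_div_mul_cancel hβ0.ne', Real.rpow_one]
    have hxA : x = C ^ (1/β) * A := by
      rw [hxdef, hAdef, Real.div_rpow hC.le hl.le, div_eq_mul_inv, neg_div,
        Real.rpow_neg hl.le]
    have hhead : ∑ i ∈ Finset.range N, ev i / (ev i + l) ≤ (N:ℝ) := by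
      calc ∑ i ∈ Finset.range N, ev i / (ev i + l) ≤ ∑ i ∈ Finset.range N, (1:ℝ) :=
            Finset.sum_le_sum fun i _ => hf_le_one i
        _ = (N:ℝ) := by simp
    have htailsum : Summable (fun i : ℕ => ev (i + N) / (ev (i + N) + l)) :=
      (summable_nat_add_iff (f := fun i => ev i / (ev i + l)) N).mpr hfsum
    have hgsum' : Summable (fun i : ℕ => ((i + N + 1 : ℕ) : ℝ) ^ (-β)) :=
      (summable_nat_add_iff (f := fun i : ℕ => ((i + 1 : ℕ) : ℝ) ^ (-β)) N).mpr hgsum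
    have htail : ∑' i : ℕ, ev (i + N) / (ev (i + N) + l) ≤ x / (β - 1) := by
      have h1 : ∑' i : ℕ, ev (i + N) / (ev (i + N) + l)
          ≤ ∑' i : ℕ, (C / l) * ((i + N + 1 : ℕ) : ℝ) ^ (-β) := by
        refine Summable.tsum_le_tsum (fun i => ?_) htailsum (hgsum'.mul_left (C/l))
        rw [div_mul_eq_mul_div]
        exact hbd (i + N)
      have h2 : ∑' i : ℕ, (C / l) * ((i + N + 1 : ℕ) : ℝ) ^ (-β)
          = (C / l) * ∑' i : ℕ, ((N + i + 1 : ℕ) : ℝ) ^ (-β) := by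
        rw [tsum_mul_left]
        congr 1
        exact tsum_congr fun i => by rw [add_comm i N]
      have h3 : (C / l) * ∑' i : ℕ, ((N + i + 1 : ℕ) : ℝ) ^ (-β)
          ≤ (C / l) * ((N:ℝ) ^ (1 - β) / (β - 1)) :=
        mul_le_mul_of_nonneg_left (tail_bound β hβ N hN1) (by positivity)
      have h4 : (N:ℝ) ^ (1 - β) ≤ x ^ (1 - β) :=
        Real.rpow_le_rpow_of_nonpos hx0 hxN (by linarith)
      have h5 : x ^ β * x ^ (1 - β) = x := by
        rw [← Real.rpow_add hx0]; norm_num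
      have h6 : (C / l) * ((N:ℝ) ^ (1 - β) / (β - 1)) ≤ x / (β - 1) := by
        rw [← hxβ]
        calc x ^ β * ((N:ℝ) ^ (1 - β) / (β - 1)) ≤ x ^ β * (x ^ (1 - β) / (β - 1)) := by
              refine mul_le_mul_of_nonneg_left ?_ (by positivity)
              gcongr
          _ = x / (β - 1) := by rw [← mul_div_assoc, h5]
      linarith
    rw [← Summable.sum_add_tsum_nat_add (f := fun i => ev i / (ev i + l)) N hfsum]
    have e : (C ^ (1/β) * (1 + 1/(β-1)) + 1) * A = x + x * (1/(β-1)) + A := by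
      rw [hxA]; ring
    have e2 : x / (β-1) = x * (1/(β-1)) := by ring
    rw [e]
    linarith [htail, hhead, hNx, hA1, e2]
end

section
/- Let (λᵢ)_{i≥1} satisfy c·i^{-β} ≤ λᵢ ≤ C·i^{-β} with β > 1, and fix s with 0 < s < 2. Then for λ ∈ (0,1], the sum ∑_{i=1}^∞ (λ/(λᵢ+λ))² · λᵢ^{s} · i^{-1} is bounded above and below by constant multiples of λ^{s} (constants depending only on c, C, β, s). -/
/-!
Write `λ = X ^ (-β)` with `X ≥ 1` and split the series at `K = ⌊X⌋₊`, the index where `λᵢ ≈ λ`.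
For `i < K` the factor `λ / (λᵢ + λ)` is comparable to `λ / λᵢ`, so the terms are
`≍ λ² i ^ (β (2 - s) - 1)` and their sum is `≍ λ² K ^ (β (2 - s)) ≍ λ ^ s`; for `i ≥ K` the
factor is at most `1`, the terms are `≲ i ^ (-β s - 1)` and the tail is `≲ K ^ (-β s) ≍ λ ^ s`.
Both power sums are estimated by telescoping: `b ^ r - a ^ r = exp (r log b) - exp (r log a)`
is controlled by convexity of `exp` and `1 / (x + 1) ≤ log (1 + 1 / x) ≤ 1 / x`.
-/
open Real Finset

lemma exp_mul_sub_le_exp_sub_exp (u v : ℝ) : exp u * (v - u) ≤ exp v - exp u := by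
  have h : exp v = exp u * exp (v - u) := by rw [← exp_add]; ring_nf
  nlinarith [add_one_le_exp (v - u), exp_pos u]

lemma exp_sub_exp_le_exp_mul_sub (u v : ℝ) : exp v - exp u ≤ exp v * (v - u) := by
  have h : exp u = exp v * exp (u - v) := by rw [← exp_add]; ring_nf
  nlinarith [add_one_le_exp (u - v), exp_pos v]

lemma rpow_mul_log_div_le_rpow_sub_rpow {a b : ℝ} (ha : 0 < a) (hb : 0 < b) (r : ℝ) :
    a ^ r * (r * log (b / a)) ≤ b ^ r - a ^ r := by
  rw [rpow_def_of_pos ha, rpow_def_of_pos hb, log_div hb.ne' ha.ne']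
  convert exp_mul_sub_le_exp_sub_exp (log a * r) (log b * r) using 2; ring

lemma rpow_sub_rpow_le_rpow_mul_log_div {a b : ℝ} (ha : 0 < a) (hb : 0 < b) (r : ℝ) :
    b ^ r - a ^ r ≤ b ^ r * (r * log (b / a)) := by
  rw [rpow_def_of_pos ha, rpow_def_of_pos hb, log_div hb.ne' ha.ne']
  convert exp_sub_exp_le_exp_mul_sub (log a * r) (log b * r) using 2; ring

lemma inv_add_one_le_log_add_one_div {x : ℝ} (hx : 0 < x) : (x + 1)⁻¹ ≤ log ((x + 1) / x) := by
  have h := one_sub_inv_le_log_of_pos (div_pos (by linarith : 0 < x + 1) hx)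
  rwa [inv_div, one_sub_div (by positivity), add_sub_cancel_left, one_div] at h

lemma log_add_one_div_le_inv {x : ℝ} (hx : 0 < x) : log ((x + 1) / x) ≤ x⁻¹ := by
  have h := log_le_sub_one_of_pos (div_pos (by linarith : 0 < x + 1) hx)
  rwa [div_sub_one hx.ne', add_sub_cancel_left, one_div] at h

lemma mul_rpow_sub_one_le_add_one_rpow_sub_rpow {x q : ℝ} (hx : 1 ≤ x) (hq : 0 ≤ q) :
    q / 2 * x ^ (q - 1) ≤ (x + 1) ^ q - x ^ q := by
  have hx0 : 0 < x := by linarith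
  calc q / 2 * x ^ (q - 1) = x ^ q * (q * (2 * x)⁻¹) := by
        rw [rpow_sub_one hx0.ne']; field_simp
    _ ≤ x ^ q * (q * log ((x + 1) / x)) := by
        gcongr
        exact (inv_anti₀ (by linarith) (by linarith)).trans (inv_add_one_le_log_add_one_div hx0)
    _ ≤ (x + 1) ^ q - x ^ q := rpow_mul_log_div_le_rpow_sub_rpow hx0 (by linarith) q

lemma add_one_rpow_sub_rpow_le {x q : ℝ} (hx : 1 ≤ x) (hq : 0 ≤ q) :
    (x + 1) ^ q - x ^ q ≤ q * 2 ^ q * x ^ (q - 1) := by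
  have hx0 : 0 < x := by linarith
  calc (x + 1) ^ q - x ^ q ≤ (x + 1) ^ q * (q * log ((x + 1) / x)) :=
        rpow_sub_rpow_le_rpow_mul_log_div hx0 (by linarith) q
    _ ≤ (2 * x) ^ q * (q * x⁻¹) := by
        gcongr
        · exact mul_nonneg hq (log_nonneg ((one_le_div hx0).2 (by linarith)))
        · linarith
        · exact log_add_one_div_le_inv hx0
    _ = q * 2 ^ q * x ^ (q - 1) := by
        rw [mul_rpow zero_le_two hx0.le, rpow_sub_one hx0.ne']; ring

lemma mul_add_one_rpow_le_rpow_sub_rpow {x p : ℝ} (hx : 0 < x) (hp : 0 ≤ p) :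
    p * (x + 1) ^ (-p - 1) ≤ x ^ (-p) - (x + 1) ^ (-p) := by
  have hx1 : 0 < x + 1 := by linarith
  have h := rpow_sub_rpow_le_rpow_mul_log_div hx hx1 (-p)
  calc p * (x + 1) ^ (-p - 1) = (x + 1) ^ (-p) * (p * (x + 1)⁻¹) := by
        rw [rpow_sub_one hx1.ne']; field_simp
    _ ≤ (x + 1) ^ (-p) * (p * log ((x + 1) / x)) := by
        gcongr; exact inv_add_one_le_log_add_one_div hx
    _ ≤ x ^ (-p) - (x + 1) ^ (-p) := by linarith

lemma sum_range_rpow_sub_one_le {q : ℝ} (hq : 0 < q) (K : ℕ) :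
    ∑ i ∈ range K, ((i : ℝ) + 1) ^ (q - 1) ≤ 2 / q * ((K : ℝ) + 1) ^ q := by
  calc ∑ i ∈ range K, ((i : ℝ) + 1) ^ (q - 1)
      ≤ ∑ i ∈ range K, 2 / q * ((((i + 1 : ℕ) : ℝ) + 1) ^ q - ((i : ℝ) + 1) ^ q) := by
        refine sum_le_sum fun i _ => ?_
        have h := mul_rpow_sub_one_le_add_one_rpow_sub_rpow (x := (i : ℝ) + 1)
          (by linarith [i.cast_nonneg (α := ℝ)]) hq.le
        push_cast
        rw [div_mul_eq_mul_div, le_div_iff₀ hq]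
        linarith
    _ = 2 / q * (((K : ℝ) + 1) ^ q - 1) := by
        rw [← mul_sum, sum_range_sub (fun j : ℕ => ((j : ℝ) + 1) ^ q)]; simp
    _ ≤ 2 / q * ((K : ℝ) + 1) ^ q := by gcongr; linarith

lemma le_sum_range_rpow_sub_one {q : ℝ} (hq : 0 < q) {K : ℕ} (hK : 1 ≤ K) :
    (1 - 2 ^ (-q)) / (q * 2 ^ q) * ((K : ℝ) + 1) ^ q ≤ ∑ i ∈ range K, ((i : ℝ) + 1) ^ (q - 1) := by
  have hK2 : (1 : ℝ) ≤ ((K : ℝ) + 1) / 2 := by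
    rw [le_div_iff₀ two_pos]; exact_mod_cast Nat.succ_le_succ hK
  have hone : 1 ≤ 2 ^ (-q) * ((K : ℝ) + 1) ^ q := by
    rw [rpow_neg zero_le_two, ← div_eq_inv_mul, ← div_rpow (by positivity) zero_le_two]
    exact one_le_rpow hK2 hq.le
  calc (1 - 2 ^ (-q)) / (q * 2 ^ q) * ((K : ℝ) + 1) ^ q
      ≤ 1 / (q * 2 ^ q) * (((K : ℝ) + 1) ^ q - 1) := by
        rw [div_mul_eq_mul_div, one_div_mul_eq_div]
        gcongr
        linarith [sub_mul 1 (2 ^ (-q)) (((K : ℝ) + 1) ^ q)]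
    _ = ∑ i ∈ range K, 1 / (q * 2 ^ q) * ((((i + 1 : ℕ) : ℝ) + 1) ^ q - ((i : ℝ) + 1) ^ q) := by
        rw [← mul_sum, sum_range_sub (fun j : ℕ => ((j : ℝ) + 1) ^ q)]; simp
    _ ≤ ∑ i ∈ range K, ((i : ℝ) + 1) ^ (q - 1) := by
        refine sum_le_sum fun i _ => ?_
        have h := add_one_rpow_sub_rpow_le (x := (i : ℝ) + 1)
          (by linarith [i.cast_nonneg (α := ℝ)]) hq.le
        push_cast
        rw [one_div_mul_eq_div, div_le_iff₀ (by positivity)]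
        linarith

lemma sum_range_add_one_rpow_le {x p : ℝ} (hx : 0 < x) (hp : 0 < p) (n : ℕ) :
    ∑ i ∈ range n, (x + i + 1) ^ (-p - 1) ≤ x ^ (-p) / p := by
  calc ∑ i ∈ range n, (x + i + 1) ^ (-p - 1)
      ≤ ∑ i ∈ range n, ((x + i) ^ (-p) - (x + (i + 1 : ℕ)) ^ (-p)) / p := by
        refine sum_le_sum fun i _ => ?_
        have h := mul_add_one_rpow_le_rpow_sub_rpow (x := x + i) (by positivity) hp.le
        push_cast
        rw [le_div_iff₀ hp, ← add_assoc]
        linarith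
    _ = (x ^ (-p) - (x + n) ^ (-p)) / p := by
        rw [← sum_div, sum_range_sub' (fun j : ℕ => (x + j) ^ (-p))]; simp
    _ ≤ x ^ (-p) / p := by gcongr; linarith [rpow_nonneg (by positivity : 0 ≤ x + n) (-p)]

lemma sq_div_add_mul_rpow_le_rpow {e l : ℝ} (he : 0 < e) (hl : 0 ≤ l) (s : ℝ) :
    (l / (e + l)) ^ 2 * e ^ s ≤ e ^ s := by
  have h : l / (e + l) ≤ 1 := div_le_one_of_le₀ (by linarith) (by linarith)
  have h0 : 0 ≤ l / (e + l) := by positivity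
  exact mul_le_of_le_one_left (by positivity) (pow_le_one₀ h0 h)

lemma sq_div_add_mul_rpow_le_sq_mul_rpow {e l : ℝ} (he : 0 < e) (hl : 0 ≤ l) (s : ℝ) :
    (l / (e + l)) ^ 2 * e ^ s ≤ l ^ 2 * e ^ (s - 2) := by
  calc (l / (e + l)) ^ 2 * e ^ s ≤ (l / e) ^ 2 * e ^ s := by
        gcongr; linarith
    _ = l ^ 2 * e ^ (s - 2) := by
        rw [rpow_sub he, rpow_two, div_pow]; ring

section

variable {c C e l u s : ℝ}

lemma sq_div_add_mul_rpow_le_of_le_mul (hC : 0 ≤ C) (hs : 0 ≤ s) (hl : 0 ≤ l) (hu : 0 ≤ u)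
    (he : 0 < e) (heu : e ≤ C * u) : (l / (e + l)) ^ 2 * e ^ s ≤ C ^ s * u ^ s :=
  calc (l / (e + l)) ^ 2 * e ^ s ≤ e ^ s := sq_div_add_mul_rpow_le_rpow he hl s
    _ ≤ (C * u) ^ s := by gcongr
    _ = C ^ s * u ^ s := mul_rpow hC hu

lemma sq_div_add_mul_rpow_le_of_mul_le (hc : 0 < c) (hs : s ≤ 2) (hl : 0 ≤ l) (hu : 0 < u)
    (hue : c * u ≤ e) : (l / (e + l)) ^ 2 * e ^ s ≤ c ^ (s - 2) * l ^ 2 * u ^ (s - 2) :=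
  calc (l / (e + l)) ^ 2 * e ^ s ≤ l ^ 2 * e ^ (s - 2) :=
        sq_div_add_mul_rpow_le_sq_mul_rpow ((mul_pos hc hu).trans_le hue) hl s
    _ ≤ l ^ 2 * (c * u) ^ (s - 2) := by
        gcongr l ^ 2 * ?_
        exact rpow_le_rpow_of_nonpos (mul_pos hc hu) hue (by linarith)
    _ = c ^ (s - 2) * l ^ 2 * u ^ (s - 2) := by rw [mul_rpow hc.le hu.le]; ring

lemma le_sq_div_add_mul_rpow (hc : 0 < c) (hs : 0 ≤ s) (hl : 0 < l) (hu : 0 < u) (hlu : l ≤ u)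
    (hue : c * u ≤ e) (heu : e ≤ C * u) :
    c ^ s / (C + 1) ^ 2 * l ^ 2 * u ^ (s - 2) ≤ (l / (e + l)) ^ 2 * e ^ s := by
  have he : 0 < e := (mul_pos hc hu).trans_le hue
  have hC : 0 < C := pos_of_mul_pos_left (he.trans_le heu) hu.le
  calc c ^ s / (C + 1) ^ 2 * l ^ 2 * u ^ (s - 2) = (l / ((C + 1) * u)) ^ 2 * (c * u) ^ s := by
        rw [mul_rpow hc.le hu.le, rpow_sub hu, rpow_two]; field_simp
    _ ≤ (l / (e + l)) ^ 2 * e ^ s := by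
        gcongr
        linarith

end

lemma rpow_neg_rpow_mul_inv {x : ℝ} (hx : 0 < x) (β r : ℝ) :
    (x ^ (-β)) ^ r * x⁻¹ = x ^ (-(β * r) - 1) := by
  rw [← rpow_mul hx.le, rpow_sub_one hx.ne']; ring_nf

lemma rpow_neg_sq_mul_rpow {X : ℝ} (hX : 0 < X) (β s : ℝ) :
    (X ^ (-β)) ^ 2 * X ^ (β * (2 - s)) = X ^ (-(β * s)) := by
  rw [← rpow_natCast, ← rpow_mul hX.le, ← rpow_add hX]; ring_nf

noncomputable def biasTerm (ev : ℕ → ℝ) (s l : ℝ) (i : ℕ) : ℝ :=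
  (l / (ev i + l)) ^ 2 * ev i ^ s * ((i + 1 : ℕ) : ℝ)⁻¹

section biasTerm

variable {β c C s l : ℝ} {ev : ℕ → ℝ}

lemma biasTerm_nonneg (hc : 0 < c) (hlow : ∀ i : ℕ, c * ((i + 1 : ℕ) : ℝ) ^ (-β) ≤ ev i)
    (i : ℕ) : 0 ≤ biasTerm ev s l i := by
  have : 0 ≤ ev i := le_trans (by positivity) (hlow i)
  unfold biasTerm; positivity

lemma biasTerm_le_rpow (hc : 0 < c) (hC : 0 ≤ C) (hs : 0 ≤ s) (hl : 0 ≤ l)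
    (hlow : ∀ i : ℕ, c * ((i + 1 : ℕ) : ℝ) ^ (-β) ≤ ev i)
    (hhigh : ∀ i : ℕ, ev i ≤ C * ((i + 1 : ℕ) : ℝ) ^ (-β)) (i : ℕ) :
    biasTerm ev s l i ≤ C ^ s * ((i : ℝ) + 1) ^ (-(β * s) - 1) := by
  have hx : (0 : ℝ) < (i + 1 : ℕ) := by positivity
  have hev : 0 < ev i := (by positivity : 0 < c * _).trans_le (hlow i)
  have h := sq_div_add_mul_rpow_le_of_le_mul hC hs hl (by positivity) hev (hhigh i)
  calc biasTerm ev s l i ≤ C ^ s * (((i + 1 : ℕ) : ℝ) ^ (-β)) ^ s * ((i + 1 : ℕ) : ℝ)⁻¹ := by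
        unfold biasTerm; gcongr
    _ = C ^ s * ((i : ℝ) + 1) ^ (-(β * s) - 1) := by
        rw [mul_assoc, rpow_neg_rpow_mul_inv hx, Nat.cast_succ]

lemma biasTerm_le_sq_mul_rpow (hc : 0 < c) (hs : s ≤ 2) (hl : 0 ≤ l)
    (hlow : ∀ i : ℕ, c * ((i + 1 : ℕ) : ℝ) ^ (-β) ≤ ev i) (i : ℕ) :
    biasTerm ev s l i ≤ c ^ (s - 2) * l ^ 2 * ((i : ℝ) + 1) ^ (β * (2 - s) - 1) := by
  have hx : (0 : ℝ) < (i + 1 : ℕ) := by positivity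
  have h := sq_div_add_mul_rpow_le_of_mul_le hc hs hl (by positivity) (hlow i)
  calc biasTerm ev s l i
      ≤ c ^ (s - 2) * l ^ 2 * ((((i + 1 : ℕ) : ℝ) ^ (-β)) ^ (s - 2) * ((i + 1 : ℕ) : ℝ)⁻¹) := by
        rw [← mul_assoc]; unfold biasTerm; gcongr
    _ = c ^ (s - 2) * l ^ 2 * ((i : ℝ) + 1) ^ (β * (2 - s) - 1) := by
        rw [rpow_neg_rpow_mul_inv hx, Nat.cast_succ]; ring_nf

lemma sq_mul_rpow_le_biasTerm (hc : 0 < c) (hs : 0 ≤ s) (hl : 0 < l)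
    (hlow : ∀ i : ℕ, c * ((i + 1 : ℕ) : ℝ) ^ (-β) ≤ ev i)
    (hhigh : ∀ i : ℕ, ev i ≤ C * ((i + 1 : ℕ) : ℝ) ^ (-β)) {i : ℕ}
    (hli : l ≤ ((i : ℝ) + 1) ^ (-β)) :
    c ^ s / (C + 1) ^ 2 * l ^ 2 * ((i : ℝ) + 1) ^ (β * (2 - s) - 1) ≤ biasTerm ev s l i := by
  have hx : (0 : ℝ) < (i + 1 : ℕ) := by positivity
  rw [← Nat.cast_succ] at hli
  have h := le_sq_div_add_mul_rpow hc hs hl (by positivity) hli (hlow i) (hhigh i)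
  calc c ^ s / (C + 1) ^ 2 * l ^ 2 * ((i : ℝ) + 1) ^ (β * (2 - s) - 1)
      = c ^ s / (C + 1) ^ 2 * l ^ 2 * (((i + 1 : ℕ) : ℝ) ^ (-β)) ^ (s - 2) *
          ((i + 1 : ℕ) : ℝ)⁻¹ := by
        rw [mul_assoc _ (_ ^ (s - 2)), rpow_neg_rpow_mul_inv hx, Nat.cast_succ]; ring_nf
    _ ≤ biasTerm ev s l i := by unfold biasTerm; gcongr

lemma summable_biasTerm (hβ : 0 < β) (hc : 0 < c) (hC : 0 ≤ C) (hs : 0 < s) (hl : 0 ≤ l)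
    (hlow : ∀ i : ℕ, c * ((i + 1 : ℕ) : ℝ) ^ (-β) ≤ ev i)
    (hhigh : ∀ i : ℕ, ev i ≤ C * ((i + 1 : ℕ) : ℝ) ^ (-β)) :
    Summable (biasTerm ev s l) := by
  have hrpow : Summable fun i : ℕ => ((i + 1 : ℕ) : ℝ) ^ (-(β * s) - 1) :=
    (summable_nat_add_iff 1).2 (Real.summable_nat_rpow.2 (by nlinarith))
  refine .of_nonneg_of_le (biasTerm_nonneg hc hlow) (fun i => ?_) (hrpow.mul_left (C ^ s))
  rw [Nat.cast_succ]
  exact biasTerm_le_rpow hc hC hs.le hl hlow hhigh i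

end biasTerm

section threshold

variable {β c C s X : ℝ} {ev : ℕ → ℝ} {K : ℕ}

lemma sum_range_biasTerm_le (hc : 0 < c) (hs2 : s < 2) (hβ : 0 < β)
    (hlow : ∀ i : ℕ, c * ((i + 1 : ℕ) : ℝ) ^ (-β) ≤ ev i) (hX : 1 ≤ X) (hKX : (K : ℝ) ≤ X) :
    ∑ i ∈ range K, biasTerm ev s (X ^ (-β)) i ≤
      c ^ (s - 2) * (2 / (β * (2 - s))) * 2 ^ (β * (2 - s)) * X ^ (-(β * s)) := by
  have hX0 : 0 < X := by linarith
  have hq : 0 < β * (2 - s) := by nlinarith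
  calc ∑ i ∈ range K, biasTerm ev s (X ^ (-β)) i
      ≤ ∑ i ∈ range K, c ^ (s - 2) * (X ^ (-β)) ^ 2 * ((i : ℝ) + 1) ^ (β * (2 - s) - 1) :=
        sum_le_sum fun i _ => biasTerm_le_sq_mul_rpow hc hs2.le (by positivity) hlow i
    _ = c ^ (s - 2) * (X ^ (-β)) ^ 2 * ∑ i ∈ range K, ((i : ℝ) + 1) ^ (β * (2 - s) - 1) :=
        (mul_sum ..).symm
    _ ≤ c ^ (s - 2) * (X ^ (-β)) ^ 2 * (2 / (β * (2 - s)) * (2 * X) ^ (β * (2 - s))) := by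
        gcongr
        exact (sum_range_rpow_sub_one_le hq K).trans (by gcongr; linarith)
    _ = c ^ (s - 2) * (2 / (β * (2 - s))) * 2 ^ (β * (2 - s)) * X ^ (-(β * s)) := by
        rw [mul_rpow zero_le_two hX0.le, ← rpow_neg_sq_mul_rpow hX0 β s]; ring

lemma tsum_biasTerm_nat_add_le (hc : 0 < c) (hC : 0 ≤ C) (hs0 : 0 < s) (hβ : 0 < β)
    (hlow : ∀ i : ℕ, c * ((i + 1 : ℕ) : ℝ) ^ (-β) ≤ ev i)
    (hhigh : ∀ i : ℕ, ev i ≤ C * ((i + 1 : ℕ) : ℝ) ^ (-β)) (hX : 1 ≤ X) (hK : 1 ≤ K)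
    (hXK : X < K + 1) :
    ∑' i, biasTerm ev s (X ^ (-β)) (i + K) ≤ C ^ s * 2 ^ (β * s) / (β * s) * X ^ (-(β * s)) := by
  have hX0 : 0 < X := by linarith
  have hp : 0 < β * s := by positivity
  have hXK2 : X / 2 ≤ K := by linarith [(Nat.one_le_cast (α := ℝ)).2 hK]
  refine Real.tsum_le_of_sum_range_le (fun i => biasTerm_nonneg hc hlow _) fun n => ?_
  calc ∑ i ∈ range n, biasTerm ev s (X ^ (-β)) (i + K)
      ≤ ∑ i ∈ range n, C ^ s * ((K : ℝ) + i + 1) ^ (-(β * s) - 1) := by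
        refine sum_le_sum fun i _ => ?_
        rw [add_comm (K : ℝ), ← Nat.cast_add]
        exact biasTerm_le_rpow hc hC hs0.le (by positivity) hlow hhigh (i + K)
    _ = C ^ s * ∑ i ∈ range n, ((K : ℝ) + i + 1) ^ (-(β * s) - 1) := (mul_sum ..).symm
    _ ≤ C ^ s * ((K : ℝ) ^ (-(β * s)) / (β * s)) := by
        gcongr; exact sum_range_add_one_rpow_le (by positivity) hp n
    _ ≤ C ^ s * ((X / 2) ^ (-(β * s)) / (β * s)) := by
        gcongr C ^ s * (?_ / _)
        exact rpow_le_rpow_of_nonpos (by positivity) hXK2 (by linarith)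
    _ = C ^ s * 2 ^ (β * s) / (β * s) * X ^ (-(β * s)) := by
        rw [div_rpow hX0.le zero_le_two, rpow_neg zero_le_two]; field_simp

lemma le_sum_range_biasTerm (hc : 0 < c) (hs0 : 0 < s) (hs2 : s < 2) (hβ : 0 < β)
    (hlow : ∀ i : ℕ, c * ((i + 1 : ℕ) : ℝ) ^ (-β) ≤ ev i)
    (hhigh : ∀ i : ℕ, ev i ≤ C * ((i + 1 : ℕ) : ℝ) ^ (-β)) (hX : 1 ≤ X) (hK : 1 ≤ K)
    (hKX : (K : ℝ) ≤ X) (hXK : X < K + 1) :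
    c ^ s / (C + 1) ^ 2 * ((1 - 2 ^ (-(β * (2 - s)))) / (β * (2 - s) * 2 ^ (β * (2 - s)))) *
      X ^ (-(β * s)) ≤ ∑ i ∈ range K, biasTerm ev s (X ^ (-β)) i := by
  have hX0 : 0 < X := by linarith
  have hq : 0 < β * (2 - s) := by nlinarith
  have h2q : (0 : ℝ) ≤ 1 - 2 ^ (-(β * (2 - s))) :=
    sub_nonneg.2 (rpow_le_one_of_one_le_of_nonpos one_le_two (by linarith))
  have hXq : X ^ (-(β * s)) ≤ (X ^ (-β)) ^ 2 * ((K : ℝ) + 1) ^ (β * (2 - s)) := by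
    rw [← rpow_neg_sq_mul_rpow hX0 β s]; gcongr
  have hsmall : ∀ i ∈ range K, X ^ (-β) ≤ ((i : ℝ) + 1) ^ (-β) := fun i hi => by
    have hiK : (i : ℝ) + 1 ≤ K := by exact_mod_cast mem_range.1 hi
    exact rpow_le_rpow_of_nonpos (by positivity) (hiK.trans hKX) (by linarith)
  calc c ^ s / (C + 1) ^ 2 * ((1 - 2 ^ (-(β * (2 - s)))) / (β * (2 - s) * 2 ^ (β * (2 - s)))) *
        X ^ (-(β * s))
      ≤ c ^ s / (C + 1) ^ 2 * (X ^ (-β)) ^ 2 *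
          ((1 - 2 ^ (-(β * (2 - s)))) / (β * (2 - s) * 2 ^ (β * (2 - s))) *
            ((K : ℝ) + 1) ^ (β * (2 - s))) := by
        grw [hXq]; exact le_of_eq (by ring)
    _ ≤ c ^ s / (C + 1) ^ 2 * (X ^ (-β)) ^ 2 *
          ∑ i ∈ range K, ((i : ℝ) + 1) ^ (β * (2 - s) - 1) := by
        gcongr; exact le_sum_range_rpow_sub_one hq hK
    _ = ∑ i ∈ range K, c ^ s / (C + 1) ^ 2 * (X ^ (-β)) ^ 2 * ((i : ℝ) + 1) ^ (β * (2 - s) - 1) :=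
        mul_sum ..
    _ ≤ ∑ i ∈ range K, biasTerm ev s (X ^ (-β)) i :=
        sum_le_sum fun i hi =>
          sq_mul_rpow_le_biasTerm hc hs0.le (by positivity) hlow hhigh (hsmall i hi)

lemma tsum_biasTerm_le (hβ : 0 < β) (hc : 0 < c) (hC : 0 ≤ C) (hs0 : 0 < s) (hs2 : s < 2)
    (hlow : ∀ i : ℕ, c * ((i + 1 : ℕ) : ℝ) ^ (-β) ≤ ev i)
    (hhigh : ∀ i : ℕ, ev i ≤ C * ((i + 1 : ℕ) : ℝ) ^ (-β)) (hX : 1 ≤ X) :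
    ∑' i, biasTerm ev s (X ^ (-β)) i ≤
      (c ^ (s - 2) * (2 / (β * (2 - s))) * 2 ^ (β * (2 - s)) + C ^ s * 2 ^ (β * s) / (β * s)) *
        X ^ (-(β * s)) := by
  have hsum := summable_biasTerm hβ hc hC hs0 (by positivity : 0 ≤ X ^ (-β)) hlow hhigh
  rw [← hsum.sum_add_tsum_nat_add ⌊X⌋₊, add_mul]
  exact add_le_add (sum_range_biasTerm_le hc hs2 hβ hlow hX (Nat.floor_le (by linarith)))
    (tsum_biasTerm_nat_add_le hc hC hs0 hβ hlow hhigh hX (Nat.le_floor (by exact_mod_cast hX))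
      (Nat.lt_floor_add_one X))

lemma le_tsum_biasTerm (hβ : 0 < β) (hc : 0 < c) (hC : 0 ≤ C) (hs0 : 0 < s) (hs2 : s < 2)
    (hlow : ∀ i : ℕ, c * ((i + 1 : ℕ) : ℝ) ^ (-β) ≤ ev i)
    (hhigh : ∀ i : ℕ, ev i ≤ C * ((i + 1 : ℕ) : ℝ) ^ (-β)) (hX : 1 ≤ X) :
    c ^ s / (C + 1) ^ 2 * ((1 - 2 ^ (-(β * (2 - s)))) / (β * (2 - s) * 2 ^ (β * (2 - s)))) *
      X ^ (-(β * s)) ≤ ∑' i, biasTerm ev s (X ^ (-β)) i := by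
  have hsum := summable_biasTerm hβ hc hC hs0 (by positivity : 0 ≤ X ^ (-β)) hlow hhigh
  exact (le_sum_range_biasTerm hc hs0 hs2 hβ hlow hhigh hX (Nat.le_floor (by exact_mod_cast hX))
    (Nat.floor_le (by linarith)) (Nat.lt_floor_add_one X)).trans
    (hsum.sum_le_tsum _ fun i _ => biasTerm_nonneg hc hlow i)

end threshold

/-- Bias computation under a source condition: `ev i` is the `(i+1)`-st eigenvalue. -/
theorem stmt_7 (β c C s : ℝ) (hβ : 1 < β) (hc : 0 < c) (hcC : c ≤ C)
    (hs0 : 0 < s) (hs2 : s < 2)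
    (ev : ℕ → ℝ)
    (hlow : ∀ i : ℕ, c * ((i + 1 : ℕ) : ℝ) ^ (-β) ≤ ev i)
    (hhigh : ∀ i : ℕ, ev i ≤ C * ((i + 1 : ℕ) : ℝ) ^ (-β)) :
    ∃ c' C' : ℝ, 0 < c' ∧ 0 < C' ∧
      ∀ l : ℝ, l ∈ Set.Ioc (0 : ℝ) 1 →
        c' * l ^ s ≤ ∑' i : ℕ, (l / (ev i + l)) ^ 2 * ev i ^ s * ((i + 1 : ℕ) : ℝ)⁻¹ ∧
        ∑' i : ℕ, (l / (ev i + l)) ^ 2 * ev i ^ s * ((i + 1 : ℕ) : ℝ)⁻¹ ≤ C' * l ^ s := by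
  have hβ0 : 0 < β := by linarith
  have hC : 0 ≤ C := hc.le.trans hcC
  have hq : 0 < β * (2 - s) := by nlinarith
  have h2q : (0 : ℝ) < 1 - 2 ^ (-(β * (2 - s))) :=
    sub_pos.2 (rpow_lt_one_of_one_lt_of_neg one_lt_two (by linarith))
  refine ⟨c ^ s / (C + 1) ^ 2 * ((1 - 2 ^ (-(β * (2 - s)))) / (β * (2 - s) * 2 ^ (β * (2 - s)))),
    c ^ (s - 2) * (2 / (β * (2 - s))) * 2 ^ (β * (2 - s)) + C ^ s * 2 ^ (β * s) / (β * s),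
    by positivity, by positivity, fun l ⟨hl0, hl1⟩ => ?_⟩
  have hX : 1 ≤ l ^ (-β⁻¹) := one_le_rpow_of_pos_of_le_one_of_nonpos hl0 hl1 (by simp [hβ0.le])
  have hXl : (l ^ (-β⁻¹)) ^ (-β) = l := by
    rw [← rpow_mul hl0.le, neg_mul_neg, inv_mul_cancel₀ hβ0.ne', rpow_one]
  have hXs : (l ^ (-β⁻¹)) ^ (-(β * s)) = l ^ s := by
    rw [← rpow_mul hl0.le, neg_mul_neg, ← mul_assoc, inv_mul_cancel₀ hβ0.ne', one_mul]
  have hlower := le_tsum_biasTerm hβ0 hc hC hs0 hs2 hlow hhigh hX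
  have hupper := tsum_biasTerm_le hβ0 hc hC hs0 hs2 hlow hhigh hX
  rw [hXl, hXs] at hlower hupper
  exact ⟨hlower, hupper⟩
end

section
/- Let U₀, U₁ be real random variables (not necessarily independent) such that for given positive constants σ₀, σ₁, κ₀, κ₁ and every t with 0 ≤ t < 1/κᵢ one has log E[exp(t·Uᵢ)] ≤ (σᵢ t)²/(1 − κᵢ t) for i = 0,1. Then with σ = σ₀ + σ₁ and κ = κ₀ + κ₁, for every t with 0 ≤ t < 1/κ, log E[exp(t(U₀ + U₁))] ≤ (σt)²/(1 − κt). -/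
/-!
Hölder's inequality with weights a₀ + a₁ = 1 gives
cgf (U₀ + U₁) t ≤ a₀ cgf U₀ (t / a₀) + a₁ cgf U₁ (t / a₁), and the sub-gamma bounds turn the
right-hand side into (σ₀ t)² / (a₀ - κ₀ t) + (σ₁ t)² / (a₁ - κ₁ t). Taking
aᵢ = κᵢ t + σᵢ (1 - κ t) / σ, so that the denominators aᵢ - κᵢ t are proportional to σᵢ, makes this
sum exactly (σ t)² / (1 - κ t).
-/

open MeasureTheory ProbabilityTheory Real

section

variable {Ω : Type*} [MeasurableSpace Ω] {μ : Measure Ω} {X Y : Ω → ℝ}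

lemma exp_mul_rpow_inv (t a x : ℝ) : exp (t * x) ^ a⁻¹ = exp (t / a * x) := by
  rw [← exp_mul]
  ring_nf

lemma memLp_exp_mul_of_integrable_exp_div_mul (hX : AEMeasurable X μ) {a t : ℝ} (ha : 0 < a)
    (h : Integrable (fun ω => exp (t / a * X ω)) μ) :
    MemLp (fun ω => exp (t * X ω)) (ENNReal.ofReal a⁻¹) μ := by
  have ha₀ : ENNReal.ofReal a⁻¹ ≠ 0 := by simpa using ha
  rw [← memLp_norm_rpow_iff (by fun_prop) ha₀ ENNReal.ofReal_ne_top,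
    ENNReal.toReal_ofReal (inv_nonneg.2 ha.le), ENNReal.div_self ha₀ ENNReal.ofReal_ne_top,
    memLp_one_iff_integrable]
  refine h.congr (.of_forall fun ω => ?_)
  simp only [norm_of_nonneg (exp_pos _).le, exp_mul_rpow_inv]

section Holder

variable {a b t : ℝ}

lemma integrable_exp_mul_add (ha : 0 < a) (hb : 0 < b) (hab : a + b = 1)
    (hX : AEMeasurable X μ) (hY : AEMeasurable Y μ)
    (hXi : Integrable (fun ω => exp (t / a * X ω)) μ)
    (hYi : Integrable (fun ω => exp (t / b * Y ω)) μ) :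
    Integrable (fun ω => exp (t * (X + Y) ω)) μ := by
  have := (Real.HolderConjugate.inv_inv ha hb hab).ennrealOfReal
  simp only [Pi.add_apply, mul_add, exp_add]
  exact (memLp_exp_mul_of_integrable_exp_div_mul hX ha hXi).integrable_mul
    (memLp_exp_mul_of_integrable_exp_div_mul hY hb hYi)

lemma mgf_add_le_rpow_mul_rpow (ha : 0 < a) (hb : 0 < b) (hab : a + b = 1)
    (hX : AEMeasurable X μ) (hY : AEMeasurable Y μ)
    (hXi : Integrable (fun ω => exp (t / a * X ω)) μ)
    (hYi : Integrable (fun ω => exp (t / b * Y ω)) μ) :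
    mgf (X + Y) μ t ≤ mgf X μ (t / a) ^ a * mgf Y μ (t / b) ^ b := by
  have h := integral_mul_le_Lp_mul_Lq_of_nonneg (Real.HolderConjugate.inv_inv ha hb hab)
    (.of_forall fun ω => (exp_pos (t * X ω)).le) (.of_forall fun ω => (exp_pos (t * Y ω)).le)
    (memLp_exp_mul_of_integrable_exp_div_mul hX ha hXi)
    (memLp_exp_mul_of_integrable_exp_div_mul hY hb hYi)
  simp only [exp_mul_rpow_inv, one_div, inv_inv, ← exp_add, ← mul_add] at h
  exact h

lemma cgf_add_le [NeZero μ] (ha : 0 < a) (hb : 0 < b) (hab : a + b = 1)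
    (hX : AEMeasurable X μ) (hY : AEMeasurable Y μ)
    (hXi : Integrable (fun ω => exp (t / a * X ω)) μ)
    (hYi : Integrable (fun ω => exp (t / b * Y ω)) μ) :
    cgf (X + Y) μ t ≤ a * cgf X μ (t / a) + b * cgf Y μ (t / b) := by
  have hM := mgf_add_le_rpow_mul_rpow ha hb hab hX hY hXi hYi
  have hM₀ := mgf_pos' (NeZero.ne μ) hXi
  have hM₁ := mgf_pos' (NeZero.ne μ) hYi
  calc cgf (X + Y) μ t ≤ log (mgf X μ (t / a) ^ a * mgf Y μ (t / b) ^ b) :=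
        log_le_log (mgf_pos' (NeZero.ne μ) (integrable_exp_mul_add ha hb hab hX hY hXi hYi)) hM
    _ = a * cgf X μ (t / a) + b * cgf Y μ (t / b) := by
        rw [log_mul (by positivity) (by positivity), log_rpow hM₀, log_rpow hM₁, cgf, cgf]

end Holder

lemma div_lt_one_div_of_mul_lt {κ a t : ℝ} (hκ : 0 < κ) (ha : 0 < a) (hta : κ * t < a) :
    t / a < 1 / κ := by
  rw [div_lt_div_iff₀ ha hκ]
  linarith

structure HasSubgammaCGF (X : Ω → ℝ) (μ : Measure Ω) (σ κ : ℝ) : Prop where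
  integrable_exp_mul : ∀ t, 0 ≤ t → t < 1 / κ → Integrable (fun ω => exp (t * X ω)) μ
  cgf_le : ∀ t, 0 ≤ t → t < 1 / κ → cgf X μ t ≤ (σ * t) ^ 2 / (1 - κ * t)

namespace HasSubgammaCGF

variable {σ κ : ℝ}

lemma aemeasurable (h : HasSubgammaCGF X μ σ κ) (hκ : 0 < κ) : AEMeasurable X μ :=
  aemeasurable_of_aemeasurable_exp_mul (t := 1 / (2 * κ)) (by positivity)
    (h.integrable_exp_mul _ (by positivity) (by gcongr; linarith)).aemeasurable

lemma integrable_exp_div_mul (h : HasSubgammaCGF X μ σ κ) (hκ : 0 < κ) {a t : ℝ} (ha : 0 < a)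
    (ht : 0 ≤ t) (hta : κ * t < a) : Integrable (fun ω => exp (t / a * X ω)) μ :=
  h.integrable_exp_mul _ (by positivity) (div_lt_one_div_of_mul_lt hκ ha hta)

lemma mul_cgf_div_le (h : HasSubgammaCGF X μ σ κ) (hκ : 0 < κ) {a t : ℝ} (ha : 0 < a)
    (ht : 0 ≤ t) (hta : κ * t < a) : a * cgf X μ (t / a) ≤ (σ * t) ^ 2 / (a - κ * t) := by
  calc a * cgf X μ (t / a) ≤ a * ((σ * (t / a)) ^ 2 / (1 - κ * (t / a))) :=
        mul_le_mul_of_nonneg_left (h.cgf_le _ (by positivity) (div_lt_one_div_of_mul_lt hκ ha hta))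
          ha.le
    _ = (σ * t) ^ 2 / (a - κ * t) := by
        have : a - κ * t ≠ 0 := by linarith
        field_simp

end HasSubgammaCGF

lemma exists_holder_weights {σ₀ σ₁ κ₀ κ₁ t : ℝ} (hσ₀ : 0 < σ₀) (hσ₁ : 0 < σ₁) (hκ₀ : 0 < κ₀)
    (hκ₁ : 0 < κ₁) (ht : 0 ≤ t) (htκ : t < 1 / (κ₀ + κ₁)) :
    ∃ a₀ a₁ : ℝ, 0 < a₀ ∧ 0 < a₁ ∧ a₀ + a₁ = 1 ∧ κ₀ * t < a₀ ∧ κ₁ * t < a₁ ∧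
      (σ₀ * t) ^ 2 / (a₀ - κ₀ * t) + (σ₁ * t) ^ 2 / (a₁ - κ₁ * t) =
        ((σ₀ + σ₁) * t) ^ 2 / (1 - (κ₀ + κ₁) * t) := by
  have hD : 0 < 1 - (κ₀ + κ₁) * t := by
    have := (lt_div_iff₀ (by positivity)).1 htκ
    linarith
  set D := 1 - (κ₀ + κ₁) * t
  have hσ₀D : 0 < σ₀ * D / (σ₀ + σ₁) := by positivity
  have hσ₁D : 0 < σ₁ * D / (σ₀ + σ₁) := by positivity
  refine ⟨κ₀ * t + σ₀ * D / (σ₀ + σ₁), κ₁ * t + σ₁ * D / (σ₀ + σ₁), by positivity, by positivity,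
    ?_, by linarith, by linarith, ?_⟩
  · field_simp
    ring
  · simp only [add_sub_cancel_left]
    field_simp

theorem HasSubgammaCGF.add [NeZero μ] {σ₀ σ₁ κ₀ κ₁ : ℝ}
    (hX : HasSubgammaCGF X μ σ₀ κ₀) (hY : HasSubgammaCGF Y μ σ₁ κ₁)
    (hσ₀ : 0 < σ₀) (hσ₁ : 0 < σ₁) (hκ₀ : 0 < κ₀) (hκ₁ : 0 < κ₁) :
    HasSubgammaCGF (X + Y) μ (σ₀ + σ₁) (κ₀ + κ₁) := by
  suffices ∀ t, 0 ≤ t → t < 1 / (κ₀ + κ₁) → Integrable (fun ω => exp (t * (X + Y) ω)) μ ∧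
      cgf (X + Y) μ t ≤ ((σ₀ + σ₁) * t) ^ 2 / (1 - (κ₀ + κ₁) * t) from
    ⟨fun t ht htκ => (this t ht htκ).1, fun t ht htκ => (this t ht htκ).2⟩
  intro t ht htκ
  obtain ⟨a₀, a₁, ha₀, ha₁, hsum, hκa₀, hκa₁, hsplit⟩ :=
    exists_holder_weights hσ₀ hσ₁ hκ₀ hκ₁ ht htκ
  have hXi := hX.integrable_exp_div_mul hκ₀ ha₀ ht hκa₀
  have hYi := hY.integrable_exp_div_mul hκ₁ ha₁ ht hκa₁
  have hXm := hX.aemeasurable hκ₀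
  have hYm := hY.aemeasurable hκ₁
  refine ⟨integrable_exp_mul_add ha₀ ha₁ hsum hXm hYm hXi hYi, ?_⟩
  calc cgf (X + Y) μ t ≤ a₀ * cgf X μ (t / a₀) + a₁ * cgf Y μ (t / a₁) :=
        cgf_add_le ha₀ ha₁ hsum hXm hYm hXi hYi
    _ ≤ (σ₀ * t) ^ 2 / (a₀ - κ₀ * t) + (σ₁ * t) ^ 2 / (a₁ - κ₁ * t) :=
        add_le_add (hX.mul_cgf_div_le hκ₀ ha₀ ht hκa₀) (hY.mul_cgf_div_le hκ₁ ha₁ ht hκa₁)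
    _ = ((σ₀ + σ₁) * t) ^ 2 / (1 - (κ₀ + κ₁) * t) := hsplit

end

theorem stmt_14_general {Ω : Type*} [MeasurableSpace Ω] {μ : Measure Ω} [IsProbabilityMeasure μ]
    (U₀ U₁ : Ω → ℝ) (σ₀ σ₁ κ₀ κ₁ : ℝ)
    (hσ₀ : 0 < σ₀) (hσ₁ : 0 < σ₁) (hκ₀ : 0 < κ₀) (hκ₁ : 0 < κ₁)
    (hint₀ : ∀ t : ℝ, 0 ≤ t → t < 1 / κ₀ → Integrable (fun ω => Real.exp (t * U₀ ω)) μ)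
    (hint₁ : ∀ t : ℝ, 0 ≤ t → t < 1 / κ₁ → Integrable (fun ω => Real.exp (t * U₁ ω)) μ)
    (hmgf₀ : ∀ t : ℝ, 0 ≤ t → t < 1 / κ₀ →
      Real.log (∫ ω, Real.exp (t * U₀ ω) ∂μ) ≤ (σ₀ * t) ^ 2 / (1 - κ₀ * t))
    (hmgf₁ : ∀ t : ℝ, 0 ≤ t → t < 1 / κ₁ →
      Real.log (∫ ω, Real.exp (t * U₁ ω) ∂μ) ≤ (σ₁ * t) ^ 2 / (1 - κ₁ * t)) :
    ∀ t : ℝ, 0 ≤ t → t < 1 / (κ₀ + κ₁) →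
      Real.log (∫ ω, Real.exp (t * (U₀ ω + U₁ ω)) ∂μ) ≤
        ((σ₀ + σ₁) * t) ^ 2 / (1 - (κ₀ + κ₁) * t) :=
  (HasSubgammaCGF.add ⟨hint₀, hmgf₀⟩ ⟨hint₁, hmgf₁⟩ hσ₀ hσ₁ hκ₀ hκ₁).cgf_le

theorem stmt_14 {Ω : Type*} [MeasurableSpace Ω] {μ : Measure Ω} [IsProbabilityMeasure μ]
    (U₀ U₁ : Ω → ℝ) (σ₀ σ₁ κ₀ κ₁ : ℝ)
    (hσ₀ : 0 < σ₀) (hσ₁ : 0 < σ₁) (hκ₀ : 0 < κ₀) (hκ₁ : 0 < κ₁)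
    (hmeas₀ : Measurable U₀) (hmeas₁ : Measurable U₁)
    (hint₀ : ∀ t : ℝ, 0 ≤ t → t < 1 / κ₀ → Integrable (fun ω => Real.exp (t * U₀ ω)) μ)
    (hint₁ : ∀ t : ℝ, 0 ≤ t → t < 1 / κ₁ → Integrable (fun ω => Real.exp (t * U₁ ω)) μ)
    (hmgf₀ : ∀ t : ℝ, 0 ≤ t → t < 1 / κ₀ →
      Real.log (∫ ω, Real.exp (t * U₀ ω) ∂μ) ≤ (σ₀ * t) ^ 2 / (1 - κ₀ * t))
    (hmgf₁ : ∀ t : ℝ, 0 ≤ t → t < 1 / κ₁ →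
      Real.log (∫ ω, Real.exp (t * U₁ ω) ∂μ) ≤ (σ₁ * t) ^ 2 / (1 - κ₁ * t)) :
    ∀ t : ℝ, 0 ≤ t → t < 1 / (κ₀ + κ₁) →
      Real.log (∫ ω, Real.exp (t * (U₀ ω + U₁ ω)) ∂μ) ≤
        ((σ₀ + σ₁) * t) ^ 2 / (1 - (κ₀ + κ₁) * t) :=
  stmt_14_general U₀ U₁ σ₀ σ₁ κ₀ κ₁ hσ₀ hσ₁ hκ₀ hκ₁ hint₀ hint₁ hmgf₀ hmgf₁
end
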